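/- Every Conradian left-invariant order on the Baumslag–Solitar group B(1,2) is bi-invariant. -/

import Mathlib

/-- The single relation b·a·b⁻¹·(a²)⁻¹ defining the Baumslag–Solitar group B(1,2),
with `false` playing the role of `a` and `true` that of `b`. -/
def bsRels : Set (FreeGroup Bool) :=
  {FreeGroup.of true * FreeGroup.of false * (FreeGroup.of true)⁻¹ *
    (FreeGroup.of false * FreeGroup.of false)⁻¹}

/-- The Baumslag–Solitar group B(1,2) = ⟨a, b ∣ b·a·b⁻¹ = a²⟩. -/
abbrev BS12 : Type := PresentedGroup bsRels

/-- The generator a of B(1,2). -/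
def aBS : BS12 := PresentedGroup.of false

/-- The generator b of B(1,2). -/
def bBS : BS12 := PresentedGroup.of true

section
variable {G : Type*} [Group G]

/-- A left-invariant total order on G, given as a relation. -/
def IsLeftTotalOrder (le : G → G → Prop) : Prop :=
  (∀ a, le a a) ∧ (∀ a b c, le a b → le b c → le a c) ∧
  (∀ a b, le a b → le b a → a = b) ∧ (∀ a b, le a b ∨ le b a) ∧
  (∀ f a b, le a b → le (f * a) (f * b))

/-- The strict relation associated to `le`. -/
def clt (le : G → G → Prop) (a b : G) : Prop := le a b ∧ ¬ le b a

/-- A Conradian (C-)ordering on G. -/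
def IsConradianOrder (le : G → G → Prop) : Prop :=
  IsLeftTotalOrder le ∧
  ∀ f g : G, clt le 1 f → clt le 1 g → ∃ n : ℕ, 0 < n ∧ clt le g (f * g ^ n)

end

/-!
Write `K` for the kernel of the `b`-exponent map `B(1,2) → ℤ`; it is the abelian normal subgroup
`ℤ[1/2]`, and an element of `b`-exponent `n ≥ 0` acts on it by conjugation as `x ↦ x ^ 2ⁿ`.

The heart of the matter holds in any Conradian left-ordered group: if `g > 1` and
`g⁻¹ h g = h ^ M` with `M ≥ 2`, then `h < g`. Otherwise take the least `j₀` with `g h^j₀ > 1`;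
applying the Conradian inequality twice yields a positive `gⁿ⁺¹ hᵉ`, while `M ≥ 2` lets one
factor that element into copies of `g h^(j₀-1) ≤ 1`, a contradiction.

In `B(1,2)` this makes `K` convex. Conjugation preserves positivity on `K` (it acts by positive
powers or their roots), and for `y ∉ K` the element `y (f⁻¹ y f)⁻¹` lies in `K`, so convexity
forbids `f⁻¹ y f ≤ 1`. A left order with conjugation-invariant positive cone is bi-invariant.
-/

def IsConradian (G : Type*) [Group G] [LT G] : Prop :=
  ∀ f g : G, 1 < f → 1 < g → ∃ n : ℕ, 0 < n ∧ g < f * g ^ n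

section LeftOrderedGroup

variable {G : Type*} [Group G]

noncomputable abbrev IsLeftTotalOrder.toLinearOrder {le : G → G → Prop} (h : IsLeftTotalOrder le) :
    LinearOrder G where
  le := le
  lt := clt le
  le_refl := h.1
  le_trans := h.2.1
  le_antisymm := h.2.2.1
  le_total := h.2.2.2.1
  lt_iff_le_not_ge _ _ := Iff.rfl
  toDecidableLE := Classical.decRel _

theorem IsLeftTotalOrder.mulLeftMono {le : G → G → Prop} (h : IsLeftTotalOrder le) :
    letI := h.toLinearOrder
    MulLeftMono G :=
  letI := h.toLinearOrder
  ⟨fun f _ _ hab => h.2.2.2.2 f _ _ hab⟩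

theorem zpow_mul_pow_eq_of_conj_eq_pow {g h : G} {M : ℕ} (hconj : g⁻¹ * h * g = h ^ M)
    (e : ℤ) (n : ℕ) : h ^ e * g ^ n = g ^ n * h ^ (e * M ^ n) := by
  have hg : ∀ e : ℤ, h ^ e * g = g * h ^ (e * M) := fun e => by
    have := conj_zpow (i := e) (a := g⁻¹) (b := h)
    rw [inv_inv, hconj, ← zpow_natCast, ← zpow_mul, mul_comm] at this
    rw [this]
    group
  induction n generalizing e with
  | zero => simp
  | succ n ih =>
    rw [pow_succ', ← mul_assoc, hg, mul_assoc, ih, ← mul_assoc, ← pow_succ', mul_assoc e,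
      ← pow_succ']

variable [LinearOrder G] [MulLeftMono G]

theorem mul_le_mul_right_of_one_lt_conj (hconj : ∀ f y : G, 1 < y → 1 < f⁻¹ * y * f)
    (f : G) {a b : G} (hab : a ≤ b) : a * f ≤ b * f := by
  obtain hlt | rfl := hab.lt_or_eq
  · have := hconj f _ (lt_inv_mul_iff_lt.mpr hlt)
    rw [show f⁻¹ * (a⁻¹ * b) * f = (a * f)⁻¹ * (b * f) by group] at this
    exact (lt_inv_mul_iff_lt.mp this).le
  · exact le_rfl

end LeftOrderedGroup

namespace IsConradian

variable {G : Type*} [Group G] [LinearOrder G] [MulLeftMono G]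
  {g h : G} {M : ℕ}

theorem exists_one_lt_pow_mul_zpow (hC : IsConradian G) (hg : 1 < g)
    (hconj : g⁻¹ * h * g = h ^ M) {n : ℕ} {e : ℤ} (hpos : 1 < g ^ (n + 1) * h ^ e) :
    ∃ m : ℕ, 1 < g ^ (n + m + 1) * h ^ (e * M ^ (m + 1)) := by
  obtain ⟨_ | m, hm, hlt⟩ := hC _ g hpos hg
  · omega
  refine ⟨m, (lt_mul_iff_one_lt_right' g).mp ?_⟩
  calc g < g ^ (n + 1) * h ^ e * g ^ (m + 1) := hlt
    _ = g * (g ^ (n + m + 1) * h ^ (e * M ^ (m + 1))) := by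
      rw [mul_assoc, zpow_mul_pow_eq_of_conj_eq_pow hconj, ← mul_assoc, ← pow_add,
        ← mul_assoc, ← pow_succ', show n + m + 1 + 1 = n + 1 + (m + 1) by omega]

theorem pow_succ_mul_zpow_le_one (hconj : g⁻¹ * h * g = h ^ M) (hM : 2 ≤ M) {a : ℤ}
    (ha : a ≤ 0) (hlow : ∀ j ≤ a, g * h ^ j ≤ 1) (n : ℕ) {e : ℤ} (he : e ≤ a * M ^ (n + 1)) :
    g ^ (n + 1) * h ^ e ≤ 1 := by
  have hM' : (2 : ℤ) ≤ M := mod_cast hM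
  induction n generalizing e with
  | zero =>
    refine (pow_one g).symm ▸ hlow e (he.trans ?_)
    rw [zero_add, pow_one]
    nlinarith
  | succ n ih =>
    have hsplit : g ^ (n + 2) * h ^ e
        = (g * h ^ a) * (g ^ (n + 1) * h ^ (e - a * M ^ (n + 1))) := by
      rw [mul_assoc, ← mul_assoc (h ^ a), zpow_mul_pow_eq_of_conj_eq_pow hconj]
      group
    rw [hsplit]
    refine mul_le_one' (hlow a le_rfl) (ih ?_)
    have haP : a * M ^ (n + 1) ≤ 0 := mul_nonpos_of_nonpos_of_nonneg ha (by positivity)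
    rw [pow_succ, ← mul_assoc] at he
    nlinarith [mul_le_mul_of_nonpos_left hM' haP]

theorem mul_inv_le_one_of_le (hC : IsConradian G) (hg : 1 < g) (hconj : g⁻¹ * h * g = h ^ M)
    (hM : 2 ≤ M) (hgh : g ≤ h) : g * h⁻¹ ≤ 1 := by
  by_contra! hpos
  have hM' : (2 : ℤ) ≤ M := mod_cast hM
  -- `j₀` is the least `j` with `1 < g * h ^ j`; it exists since `g * h ^ (-M) = h⁻¹ * g ≤ 1`.
  have hbdd : ∀ j : ℤ, j ≤ -M → g * h ^ j ≤ 1 := fun j hj => calc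
    g * h ^ j ≤ g * h ^ j * h ^ (-M - j) :=
      le_mul_of_one_le_right' (one_le_zpow (hg.le.trans hgh) (by omega))
    _ = h⁻¹ * g := by
      rw [← zpow_neg_one, ← pow_one g, zpow_mul_pow_eq_of_conj_eq_pow hconj]
      group
    _ ≤ 1 := inv_mul_le_one_iff.mpr hgh
  obtain ⟨j₀, hj₀, hleast⟩ := Int.exists_least_of_bdd (P := fun j => 1 < g * h ^ j)
    ⟨-M, fun j hj => not_lt.mp fun hlt => (hbdd j hlt.le).not_gt hj⟩
    ⟨-1, by rwa [zpow_neg_one]⟩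
  have hj₀neg : j₀ ≤ -1 := hleast (-1) (by rwa [zpow_neg_one])
  have hlow : ∀ j ≤ j₀ - 1, g * h ^ j ≤ 1 := fun j hj => by
    by_contra! hlt
    have := hleast j hlt
    omega
  -- Two Conradian steps from `g * h ^ j₀` give a positive `g ^ (n + 1) * h ^ e` whose exponent
  -- `e` is small enough to write it as a product of the nonpositive elements `g * h ^ (j₀ - 1)`.
  obtain ⟨m₁, hm₁⟩ := exists_one_lt_pow_mul_zpow hC hg hconj (n := 0) (by rwa [pow_one])
  obtain ⟨m₂, hm₂⟩ := exists_one_lt_pow_mul_zpow hC hg hconj hm₁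
  refine hm₂.not_ge (pow_succ_mul_zpow_le_one hconj hM (by omega) hlow _ ?_)
  calc j₀ * M ^ (m₁ + 1) * M ^ (m₂ + 1) = (j₀ * M) * M ^ (0 + m₁ + m₂ + 1) := by ring
    _ ≤ (j₀ - 1) * M ^ (0 + m₁ + m₂ + 1) := by gcongr; nlinarith

theorem lt_of_conj_eq_pow (hC : IsConradian G) (hg : 1 < g) (hconj : g⁻¹ * h * g = h ^ M)
    (hM : 2 ≤ M) : h < g := by
  by_contra! hgh
  have hh : 1 ≤ h := hg.le.trans hgh
  -- By the previous lemma `g * h⁻¹ ≤ 1`; then `g * h ^ (M - 1)` again satisfies its hypotheses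
  -- but violates its conclusion.
  obtain ⟨N, rfl⟩ : ∃ N, M = N + 2 := ⟨M - 2, by omega⟩
  have hg₂ : g ≤ g * h ^ (N + 1) := le_mul_of_one_le_right' (one_le_pow_of_one_le' hh _)
  have hconj₂ : (g * h ^ (N + 1))⁻¹ * h * (g * h ^ (N + 1)) = h ^ (N + 2) := by
    rw [show (g * h ^ (N + 1))⁻¹ * h * (g * h ^ (N + 1))
        = (h ^ (N + 1))⁻¹ * (g⁻¹ * h * g) * h ^ (N + 1) by group, hconj]
    group
  have hg₂h : g * h ^ (N + 1) ≤ h := by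
    rw [← inv_mul_le_one_iff, ← mul_assoc, ← zpow_neg_one, ← pow_one g,
      zpow_mul_pow_eq_of_conj_eq_pow hconj]
    convert mul_inv_le_one_of_le hC hg hconj hM hgh using 1
    group
  refine (mul_inv_le_one_of_le hC (hg.trans_le hg₂) hconj₂ hM hg₂h).not_gt ?_
  calc 1 < g := hg
    _ ≤ g * h ^ N := le_mul_of_one_le_right' (one_le_pow_of_one_le' hh _)
    _ = g * h ^ (N + 1) * h⁻¹ := by group

theorem pow_lt_of_conj_eq_pow (hC : IsConradian G) (hg : 1 < g) (hconj : g * h * g⁻¹ = h ^ M)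
    (hM : 2 ≤ M) : h ^ M < g := by
  by_contra! hle
  have hroot : g⁻¹ * h ^ M = h * g⁻¹ := by rw [← hconj]; group
  have hone : 1 < h * g⁻¹ := by
    refine lt_of_le_of_ne (hroot ▸ le_inv_mul_iff_le.mpr hle) fun heq => ?_
    obtain rfl : h = g := by rw [← mul_inv_eq_one, ← heq]
    obtain ⟨N, rfl⟩ : ∃ N, M = N + 2 := ⟨M - 2, by omega⟩
    refine (lt_mul_of_one_lt_right' h (one_lt_pow' hg N.succ_ne_zero)).ne' ?_
    rw [← pow_succ', ← hconj]
    group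
  -- `h * g⁻¹` conjugates `h` as `g⁻¹` does, but it is positive.
  have hconj' : (h * g⁻¹)⁻¹ * h * (h * g⁻¹) = h ^ M := by rw [← hconj]; group
  have := lt_of_conj_eq_pow hC hone hconj' hM
  exact (Left.one_lt_inv_iff.mp ((lt_mul_iff_one_lt_right' h).mp this)).not_gt hg

end IsConradian

namespace BS12

open Subgroup

theorem b_mul_a_mul_b_inv : bBS * aBS * bBS⁻¹ = aBS ^ 2 := by
  rw [← mul_inv_eq_one, pow_two]
  exact PresentedGroup.one_of_mem (Set.mem_singleton _)

def bExp : BS12 →* Multiplicative ℤ :=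
  PresentedGroup.toGroup (f := fun x => Multiplicative.ofAdd (if x then 1 else 0)) <| by
    rintro r rfl
    simp

@[simp] theorem bExp_a : bExp aBS = 1 := PresentedGroup.toGroup.of _

@[simp] theorem bExp_b : bExp bBS = Multiplicative.ofAdd 1 := PresentedGroup.toGroup.of _

/-- A `2ⁿ`-th root of `a`; it corresponds to `2⁻ⁿ ∈ ℤ[1/2]`. -/
def aRoot (n : ℕ) : BS12 := (bBS ^ n)⁻¹ * aBS * bBS ^ n

theorem aRoot_succ_sq (n : ℕ) : aRoot (n + 1) ^ 2 = aRoot n := by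
  calc aRoot (n + 1) ^ 2 = (bBS ^ (n + 1))⁻¹ * aBS ^ 2 * bBS ^ (n + 1) := by
        rw [aRoot, pow_two, pow_two]; group
    _ = (bBS ^ (n + 1))⁻¹ * (bBS * aBS * bBS⁻¹) * bBS ^ (n + 1) := by rw [b_mul_a_mul_b_inv]
    _ = aRoot n := by rw [aRoot]; group

theorem b_mul_aRoot_mul_b_inv (n : ℕ) : bBS * aRoot n * bBS⁻¹ = aRoot n ^ 2 := by
  cases n with
  | zero => simpa [aRoot] using b_mul_a_mul_b_inv
  | succ n => rw [aRoot_succ_sq, aRoot, aRoot]; group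

theorem b_inv_mul_aRoot_mul_b (n : ℕ) : bBS⁻¹ * aRoot n * bBS = aRoot (n + 1) := by
  rw [aRoot, aRoot]; group

def dyadic : Subgroup BS12 := ⨆ n, zpowers (aRoot n)

theorem zpowers_aRoot_mono : Monotone fun n => zpowers (aRoot n) :=
  monotone_nat_of_le_succ fun n => zpowers_le.mpr ⟨2, by simp [← aRoot_succ_sq n]⟩

theorem mem_dyadic_iff {x : BS12} : x ∈ dyadic ↔ ∃ n, x ∈ zpowers (aRoot n) :=
  mem_iSup_of_directed zpowers_aRoot_mono.directed_le

theorem commute_of_mem_dyadic {x y : BS12} (hx : x ∈ dyadic) (hy : y ∈ dyadic) :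
    Commute x y := by
  obtain ⟨m, hm⟩ := mem_dyadic_iff.mp hx
  obtain ⟨n, hn⟩ := mem_dyadic_iff.mp hy
  obtain ⟨i, rfl⟩ := mem_zpowers_iff.mp (zpowers_aRoot_mono (le_max_left m n) hm)
  obtain ⟨j, rfl⟩ := mem_zpowers_iff.mp (zpowers_aRoot_mono (le_max_right m n) hn)
  exact Commute.zpow_zpow_self _ i j

theorem b_mul_mul_b_inv_of_mem_dyadic {x : BS12} (hx : x ∈ dyadic) :
    bBS * x * bBS⁻¹ = x ^ 2 := by
  obtain ⟨n, hn⟩ := mem_dyadic_iff.mp hx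
  obtain ⟨k, rfl⟩ := mem_zpowers_iff.mp hn
  rw [← conj_zpow, b_mul_aRoot_mul_b_inv, ← zpow_natCast, ← zpow_natCast, ← zpow_mul,
    ← zpow_mul, mul_comm]

theorem b_inv_mul_mul_b_mem_dyadic {x : BS12} (hx : x ∈ dyadic) :
    bBS⁻¹ * x * bBS ∈ dyadic := by
  obtain ⟨n, hn⟩ := mem_dyadic_iff.mp hx
  obtain ⟨k, rfl⟩ := mem_zpowers_iff.mp hn
  have := conj_zpow (i := k) (a := bBS⁻¹) (b := aRoot n)
  rw [inv_inv, b_inv_mul_aRoot_mul_b] at this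
  rw [← this]
  exact mem_iSup_of_mem (n + 1) (zpow_mem_zpowers _ _)

theorem aBS_mem_dyadic : aBS ∈ dyadic :=
  mem_iSup_of_mem 0 (by simp [aRoot])

instance dyadic_normal : dyadic.Normal := by
  rw [← normalizer_eq_top_iff, eq_top_iff, ← PresentedGroup.closure_range_of, closure_le]
  rintro _ ⟨_ | _, rfl⟩
  · exact le_normalizer aBS_mem_dyadic
  · change bBS ∈ _
    refine mem_normalizer_iff.mpr fun x => ⟨fun hx => ?_, fun hx => ?_⟩
    · exact b_mul_mul_b_inv_of_mem_dyadic hx ▸ pow_mem hx 2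
    · simpa [mul_assoc] using b_inv_mul_mul_b_mem_dyadic hx

theorem exists_eq_mul_zpow (x : BS12) : ∃ u ∈ dyadic, ∃ k : ℤ, x = u * bBS ^ k := by
  have hsup : dyadic ⊔ zpowers bBS = ⊤ := by
    rw [eq_top_iff, ← PresentedGroup.closure_range_of, closure_le]
    rintro _ ⟨_ | _, rfl⟩
    · exact mem_sup_left aBS_mem_dyadic
    · exact mem_sup_right (mem_zpowers bBS)
  have hx : x ∈ ((dyadic ⊔ zpowers bBS : Subgroup BS12) : Set BS12) := by
    rw [hsup]; trivial
  rw [normal_mul] at hx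
  obtain ⟨u, hu, _, ⟨k, rfl⟩, rfl⟩ := hx
  exact ⟨u, hu, k, rfl⟩

theorem ker_bExp : bExp.ker = dyadic := by
  have hle : dyadic ≤ bExp.ker :=
    iSup_le fun n => zpowers_le.mpr (by simp [MonoidHom.mem_ker, aRoot])
  refine le_antisymm (fun x hx => ?_) hle
  obtain ⟨u, hu, k, rfl⟩ := exists_eq_mul_zpow x
  have hk : k = 0 := by
    simpa [MonoidHom.mem_ker, MonoidHom.mem_ker.mp (hle hu), ← ofAdd_zsmul] using hx
  simpa [hk] using hu

theorem b_pow_mul_mul_b_pow_inv {x : BS12} (hx : x ∈ dyadic) (n : ℕ) :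
    bBS ^ n * x * (bBS ^ n)⁻¹ = x ^ 2 ^ n := by
  induction n with
  | zero => simp
  | succ n ih =>
    rw [pow_succ', mul_inv_rev, show bBS * bBS ^ n * x * ((bBS ^ n)⁻¹ * bBS⁻¹)
      = bBS * (bBS ^ n * x * (bBS ^ n)⁻¹) * bBS⁻¹ by group, ih, ← conj_pow,
      b_mul_mul_b_inv_of_mem_dyadic hx, ← pow_mul, pow_succ']

theorem conj_eq_pow_of_toAdd_bExp_eq {f : BS12} {n : ℕ} (hf : (bExp f).toAdd = n)
    {x : BS12} (hx : x ∈ bExp.ker) : f * x * f⁻¹ = x ^ 2 ^ n := by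
  obtain ⟨u, hu, k, rfl⟩ := exists_eq_mul_zpow f
  obtain rfl : k = n := by
    simpa [MonoidHom.mem_ker.mp (ker_bExp ▸ hu : u ∈ bExp.ker)] using hf
  rw [ker_bExp] at hx
  rw [zpow_natCast, mul_inv_rev, show u * bBS ^ n * x * ((bBS ^ n)⁻¹ * u⁻¹)
    = u * (bBS ^ n * x * (bBS ^ n)⁻¹) * u⁻¹ by group, b_pow_mul_mul_b_pow_inv hx,
    ((commute_of_mem_dyadic hu hx).pow_right _).eq, mul_inv_cancel_right]

section LeftOrder

variable [LinearOrder BS12] [MulLeftMono BS12]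

theorem one_lt_conj_of_mem_ker {x : BS12} (hx : x ∈ bExp.ker) (hpos : 1 < x) (f : BS12) :
    1 < f⁻¹ * x * f := by
  obtain ⟨n, hn | hn⟩ := Int.eq_nat_or_neg (bExp f).toAdd
  · have hconj := conj_eq_pow_of_toAdd_bExp_eq hn (bExp.normal_ker.conj_mem' x hx f)
    rw [show f * (f⁻¹ * x * f) * f⁻¹ = x by group] at hconj
    by_contra! hle
    exact (pow_le_one' hle _).not_gt (hconj ▸ hpos)
  · have hpow := conj_eq_pow_of_toAdd_bExp_eq (f := f⁻¹) (n := n) (by simp [hn]) hx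
    rw [inv_inv] at hpow
    exact hpow ▸ one_lt_pow' hpos (by positivity)

theorem mem_ker_of_one_lt_of_le (hC : IsConradian BS12) {w η : BS12} (hw : 1 < w)
    (hwη : w ≤ η) (hη : η ∈ bExp.ker) : w ∈ bExp.ker := by
  obtain ⟨_ | n, hn | hn⟩ := Int.eq_nat_or_neg (bExp w).toAdd <;>
    try simpa [MonoidHom.mem_ker] using hn
  all_goals
    have hM : 2 ≤ 2 ^ (n + 1) := Nat.le_self_pow n.succ_ne_zero 2
    refine absurd hwη (not_le.mpr ?_)
  · have hconj := conj_eq_pow_of_toAdd_bExp_eq hn (bExp.normal_ker.conj_mem' η hη w)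
    have hroot : (w⁻¹ * η * w) ^ 2 ^ (n + 1) = η := by rw [← hconj]; group
    exact hroot ▸ IsConradian.pow_lt_of_conj_eq_pow hC hw hconj hM
  · have hpow := conj_eq_pow_of_toAdd_bExp_eq (f := w⁻¹) (n := n + 1) (by simp [hn]) hη
    rw [inv_inv] at hpow
    exact IsConradian.lt_of_conj_eq_pow hC hw hpow hM

theorem one_lt_conj (hC : IsConradian BS12) {y : BS12} (hy : 1 < y) (f : BS12) :
    1 < f⁻¹ * y * f := by
  by_contra! hle
  have hη : y * (f⁻¹ * y * f)⁻¹ ∈ bExp.ker := by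
    simp [MonoidHom.mem_ker, mul_comm]
  have hyη : y ≤ y * (f⁻¹ * y * f)⁻¹ := le_mul_of_one_le_right' (Left.one_le_inv_iff.mpr hle)
  exact hle.not_gt (one_lt_conj_of_mem_ker (mem_ker_of_one_lt_of_le hC hy hyη hη) hy f)

end LeftOrder

end BS12

/-- Every Conradian left-invariant order on B(1,2) is bi-invariant. -/
theorem BS12_conradian_biinvariant (le : BS12 → BS12 → Prop)
    (h : IsConradianOrder le) :
    ∀ f a b : BS12, le a b → le (a * f) (b * f) := by
  let := h.1.toLinearOrder
  have := h.1.mulLeftMono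
  exact fun f _ _ => mul_le_mul_right_of_one_lt_conj (fun f _ hy => BS12.one_lt_conj h.2 hy f) f
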